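/- arXiv:1004.0208 — 3 statements merged into one kernel-verified Lean document; each statement's English description precedes it below -/
import Mathlib

section
/- For integers n ≥ 3 and 1 ≤ K ≤ n-2, with T(n,K) = min_{a ∈ A(n,K)} max_{1≤k≤K} (a_k - 1)(n-k-1), we have T(n,K) ≥ (n/K)(n-2) - (2n - K - 2). -/
open Finset

/-- The delay exponent of the JAP-B scheme with parameter vector `a`:
`max_{1≤k≤K} (a_k - 1)(n - k - 1)`, indexing `k = i+1` for `i : Fin K`. -/
def JAPBdelay (n K : ℕ) (a : Fin K → ℕ) : ℕ :=
  Finset.univ.sup fun i : Fin K => (a i - 1) * (n - (i : ℕ) - 2)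

/-- `T(n,K)`: the minimum JAP-B delay exponent over all `K`-tuples of positive
integers summing to `n`. -/
noncomputable def Tnk (n K : ℕ) : ℕ :=
  sInf {t | ∃ a : Fin K → ℕ, (∀ i, 1 ≤ a i) ∧ (∑ i, a i) = n ∧ t = JAPBdelay n K a}

/-- Lower bound: `T(n,K) ≥ (n/K)(n-2) - (2n-K-2)`. -/
theorem stmt_6 (n K : ℕ) (hn : 3 ≤ n) (hK1 : 1 ≤ K) (hK2 : K ≤ n - 2) :
    ((n : ℝ) / (K : ℝ)) * ((n : ℝ) - 2) - (2 * (n : ℝ) - (K : ℝ) - 2) ≤ (Tnk n K : ℝ) := by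
  have hKn : K + 2 ≤ n := by omega
  -- the defining set is nonempty
  have hne : {t | ∃ a : Fin K → ℕ, (∀ i, 1 ≤ a i) ∧ (∑ i, a i) = n ∧
      t = JAPBdelay n K a}.Nonempty := by
    refine ⟨_, fun i => 1 + if i = (⟨0, hK1⟩ : Fin K) then n - K else 0,
      fun i => Nat.le_add_right 1 _, ?_, rfl⟩
    rw [Finset.sum_add_distrib, Finset.sum_ite_eq' Finset.univ (⟨0, hK1⟩ : Fin K)]
    simp
    omega
  have hmem := Nat.sInf_mem hne
  obtain ⟨a, ha1, hsum, ht⟩ := hmem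
  have hsum1 : ∑ i : Fin K, (a i - 1) + K = n := by
    have h : ∑ i : Fin K, (a i - 1 + 1) = n := by
      rw [← hsum]; exact Finset.sum_congr rfl fun i _ => by have := ha1 i; clear ht hne; omega
    rw [Finset.sum_add_distrib] at h; simpa using h
  -- key estimate in ℕ
  have key : (n - K) * (n - K - 1) ≤ K * JAPBdelay n K a := by
    calc (n - K) * (n - K - 1)
        = (∑ i : Fin K, (a i - 1)) * (n - K - 1) := by
          congr 1; clear ht hne; omega
      _ = ∑ i : Fin K, (a i - 1) * (n - K - 1) := Finset.sum_mul _ _ _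
      _ ≤ ∑ i : Fin K, (a i - 1) * (n - (i : ℕ) - 2) := by
          refine Finset.sum_le_sum fun i _ => Nat.mul_le_mul_left _ ?_
          have := i.isLt; clear ht hne; omega
      _ ≤ Finset.univ.card • JAPBdelay n K a :=
          Finset.sum_le_card_nsmul _ _ _ fun i _ =>
            Finset.le_sup (f := fun i : Fin K => (a i - 1) * (n - (i : ℕ) - 2))
              (Finset.mem_univ i)
      _ = K * JAPBdelay n K a := by simp [smul_eq_mul]
  have hcast : ((n : ℝ) - K) * ((n : ℝ) - K - 1) ≤ (K : ℝ) * (JAPBdelay n K a : ℝ) := by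
    have : (((n - K) * (n - K - 1) : ℕ) : ℝ) ≤ ((K * JAPBdelay n K a : ℕ) : ℝ) := by
      exact_mod_cast key
    have h1 : ((n - K : ℕ) : ℝ) = (n : ℝ) - K := by
      rw [Nat.cast_sub (show K ≤ n by clear ht hne; omega)]
    have h2 : ((n - K - 1 : ℕ) : ℝ) = (n : ℝ) - K - 1 := by
      rw [Nat.cast_sub (show 1 ≤ n - K by clear ht hne; omega), h1]; simp
    rw [Nat.cast_mul, Nat.cast_mul, h1, h2] at this
    exact this
  have hK0 : (0 : ℝ) < K := by exact_mod_cast hK1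
  have hnR : (K : ℝ) + 2 ≤ (n : ℝ) := by exact_mod_cast hKn
  show _ ≤ ((Tnk n K : ℕ) : ℝ)
  rw [show Tnk n K = JAPBdelay n K a from ht]
  rw [sub_le_iff_le_add, div_mul_eq_mul_div, div_le_iff₀ hK0]
  nlinarith [hcast, hnR, hK0]
end

section
/- Relaxed waterfilling optimum: for integers n ≥ 3, 1 ≤ K ≤ n-2, consider the problem of minimizing max_{1≤k≤K} (a_k - 1)(n-k-1) over real vectors a ∈ ℝ_{>0}^K with Σ a_k = n. The minimum value equals c := (n-K)/S(n,K) where S(n,K) = Σ_{k=1}^K 1/(n-k-1), achieved by a_k = 1 + c/(n-k-1). -/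
open Finset

/-!
With `b i = a i - 1` the constraint reads `∑ b i = N - |ι|`, and if `M` bounds every `b i * w i`
then `b i ≤ M / w i`, so summing gives `N - |ι| ≤ M * ∑ 1 / w i`. The bound is attained when all
the products `b i * w i` are equal, i.e. at `a i = 1 + c / w i` with `c = (N - |ι|) / ∑ 1 / w i`.
The theorem is the case `ι = Fin K`, `w i = n - i - 2` (the paper's `n - k - 1` with `k = i + 1`).
-/

theorem sum_Icc_one_eq_sum_fin {M : Type*} [AddCommMonoid M] (f : ℕ → M) (K : ℕ) :
    ∑ k ∈ Icc 1 K, f k = ∑ i : Fin K, f (i + 1) := by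
  rw [Fin.sum_univ_eq_sum_range (fun i => f (i + 1)), ← Ico_add_one_right_eq_Icc,
    sum_Ico_eq_sum_range, Nat.add_sub_cancel]
  simp only [add_comm]

theorem iSup_one_add_div_sub_one_mul {ι : Type*} [Nonempty ι] {w : ι → ℝ} (hw : ∀ i, w i ≠ 0)
    (c : ℝ) : ⨆ i, (1 + c / w i - 1) * w i = c := by
  simp [div_mul_cancel₀ _ (hw _)]

section Waterfilling

variable {ι : Type*} [Fintype ι] {w : ι → ℝ}

theorem sum_le_iSup_mul_mul_sum_inv (hw : ∀ i, 0 < w i) (b : ι → ℝ) :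
    ∑ i, b i ≤ (⨆ i, b i * w i) * ∑ i, (w i)⁻¹ := by
  rw [mul_sum]
  refine sum_le_sum fun i _ => ?_
  calc b i = b i * w i * (w i)⁻¹ := by field_simp [(hw i).ne']
    _ ≤ (⨆ i, b i * w i) * (w i)⁻¹ :=
      mul_le_mul_of_nonneg_right (le_ciSup (Set.finite_range fun i => b i * w i).bddAbove i)
        (inv_nonneg.2 (hw i).le)

theorem sum_inv_pos [Nonempty ι] (hw : ∀ i, 0 < w i) : 0 < ∑ i, (w i)⁻¹ :=
  sum_pos (fun i _ => inv_pos.2 (hw i)) univ_nonempty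

variable (w) in
noncomputable def waterLevel (N : ℝ) : ℝ := (N - Fintype.card ι) / ∑ i, (w i)⁻¹

theorem waterLevel_nonneg [Nonempty ι] (hw : ∀ i, 0 < w i) {N : ℝ}
    (hN : (Fintype.card ι : ℝ) ≤ N) : 0 ≤ waterLevel w N :=
  div_nonneg (sub_nonneg.2 hN) (sum_inv_pos hw).le

theorem waterLevel_le_iSup_sub_one_mul [Nonempty ι] (hw : ∀ i, 0 < w i) {N : ℝ} {a : ι → ℝ}
    (ha : ∑ i, a i = N) : waterLevel w N ≤ ⨆ i, (a i - 1) * w i := by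
  rw [waterLevel, div_le_iff₀ (sum_inv_pos hw), ← ha, ← card_univ, ← nsmul_one, ← sum_const,
    ← sum_sub_distrib]
  exact sum_le_iSup_mul_mul_sum_inv hw _

theorem sum_one_add_waterLevel_div [Nonempty ι] (hw : ∀ i, 0 < w i) (N : ℝ) :
    ∑ i, (1 + waterLevel w N / w i) = N := by
  simp only [sum_add_distrib, sum_const, card_univ, nsmul_one, div_eq_mul_inv _ (w _), ← mul_sum]
  rw [waterLevel, div_mul_cancel₀ _ (sum_inv_pos hw).ne']
  ring

theorem one_add_waterLevel_div_pos [Nonempty ι] (hw : ∀ i, 0 < w i) {N : ℝ}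
    (hN : (Fintype.card ι : ℝ) ≤ N) (i : ι) : 0 < 1 + waterLevel w N / w i :=
  add_pos_of_pos_of_nonneg one_pos (div_nonneg (waterLevel_nonneg hw hN) (hw i).le)

theorem isLeast_waterLevel [Nonempty ι] (hw : ∀ i, 0 < w i) {N : ℝ}
    (hN : (Fintype.card ι : ℝ) ≤ N) :
    IsLeast {v | ∃ a : ι → ℝ, (∀ i, 0 < a i) ∧ ∑ i, a i = N ∧ v = ⨆ i, (a i - 1) * w i}
      (waterLevel w N) := by
  refine ⟨⟨_, one_add_waterLevel_div_pos hw hN, sum_one_add_waterLevel_div hw N,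
    (iSup_one_add_div_sub_one_mul (fun i => (hw i).ne') _).symm⟩, ?_⟩
  rintro v ⟨a, -, ha, rfl⟩
  exact waterLevel_le_iSup_sub_one_mul hw ha

end Waterfilling

theorem stmt_7_general (n K : ℕ) (hK1 : 1 ≤ K) (hK2 : K ≤ n - 2)
    (S c : ℝ)
    (hS : S = ∑ k ∈ Finset.Icc 1 K, 1 / ((n : ℝ) - (k : ℝ) - 1))
    (hc : c = ((n : ℝ) - (K : ℝ)) / S)
    (astar : Fin K → ℝ)
    (hastar : ∀ i : Fin K, astar i = 1 + c / ((n : ℝ) - (i : ℕ) - 2)) :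
    IsLeast {v : ℝ | ∃ a : Fin K → ℝ, (∀ i, 0 < a i) ∧ (∑ i, a i) = (n : ℝ) ∧
        v = ⨆ i : Fin K, (a i - 1) * ((n : ℝ) - (i : ℕ) - 2)} c
    ∧ (∀ i, 0 < astar i) ∧ (∑ i, astar i) = (n : ℝ)
    ∧ (⨆ i : Fin K, (astar i - 1) * ((n : ℝ) - (i : ℕ) - 2)) = c := by
  have : Nonempty (Fin K) := ⟨⟨0, hK1⟩⟩
  set w : Fin K → ℝ := fun i => (n : ℝ) - (i : ℕ) - 2
  have hw : ∀ i, 0 < w i := fun i => by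
    have : ((i : ℕ) : ℝ) + 3 ≤ n := by exact_mod_cast (by omega : (i : ℕ) + 3 ≤ n)
    linarith
  have hKn : (Fintype.card (Fin K) : ℝ) ≤ n := by
    rw [Fintype.card_fin]; exact_mod_cast (by omega : K ≤ n)
  have hc_eq : c = waterLevel w n := by
    rw [hc, hS, waterLevel, Fintype.card_fin, sum_Icc_one_eq_sum_fin]
    congr 1
    refine sum_congr rfl fun i _ => ?_
    push_cast
    ring
  obtain rfl : astar = fun i => 1 + c / w i := funext hastar
  subst hc_eq
  exact ⟨isLeast_waterLevel hw hKn, one_add_waterLevel_div_pos hw hKn,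
    sum_one_add_waterLevel_div hw n, iSup_one_add_div_sub_one_mul (fun i => (hw i).ne') _⟩

/-- The relaxed (real) waterfilling problem: minimise
`max_{1≤k≤K} (a_k - 1)(n-k-1)` over real vectors `a ∈ ℝ_{>0}^K` with `Σ a_k = n`.
The minimum is `c = (n-K)/S(n,K)` with `S(n,K) = Σ_{k=1}^K 1/(n-k-1)`,
achieved by `a_k = 1 + c/(n-k-1)`. -/
theorem stmt_7 (n K : ℕ) (hn : 3 ≤ n) (hK1 : 1 ≤ K) (hK2 : K ≤ n - 2)
    (S c : ℝ)
    (hS : S = ∑ k ∈ Finset.Icc 1 K, 1 / ((n : ℝ) - (k : ℝ) - 1))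
    (hc : c = ((n : ℝ) - (K : ℝ)) / S)
    (astar : Fin K → ℝ)
    (hastar : ∀ i : Fin K, astar i = 1 + c / ((n : ℝ) - (i : ℕ) - 2)) :
    IsLeast {v : ℝ | ∃ a : Fin K → ℝ, (∀ i, 0 < a i) ∧ (∑ i, a i) = (n : ℝ) ∧
        v = ⨆ i : Fin K, (a i - 1) * ((n : ℝ) - (i : ℕ) - 2)} c
    ∧ (∀ i, 0 < astar i) ∧ (∑ i, astar i) = (n : ℝ)
    ∧ (⨆ i : Fin K, (astar i - 1) * ((n : ℝ) - (i : ℕ) - 2)) = c :=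
  stmt_7_general n K hK1 hK2 S c hS hc astar hastar
end

section
/- Asymptotics in Regime I for parent JAP-B schemes: fix α ∈ (0, 1/2] and let K = ⌊1/α⌋ - 1 ≥ 1. Then T(n, K)/n^2 → 1/(⌊1/α⌋ - 1) as n → ∞. -/
open Finset Filter

/-!
Averaging the `K` terms of the maximum and bounding each factor `n - k - 1` below by
`n - K - 1` gives `K · T(n,K) ≥ (n - K)(n - K - 1) ≥ (n - K - 1)²`, since the excesses `a_k - 1` sum to `n - K`.
Conversely, spreading `n - K` as evenly as possible makes every excess at most `⌊(n-K)/K⌋ + 1`,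
so `K · T(n,K) ≤ K (⌊(n-K)/K⌋ + 1) n ≤ n²`. Both bounds are `n²/K + O(n)`.
-/

lemma sum_tsub_one {ι : Type*} [Fintype ι] {a : ι → ℕ} (ha : ∀ i, 1 ≤ a i) :
    ∑ i, (a i - 1) = ∑ i, a i - Fintype.card ι := by
  rw [sum_tsub_distrib _ fun i _ => ha i, sum_const, card_univ, smul_eq_mul, mul_one]

lemma sq_le_mul_JAPBdelay {n K : ℕ} {a : Fin K → ℕ} (ha : ∀ i, 1 ≤ a i) (hsum : ∑ i, a i = n) :
    (n - (K + 1)) ^ 2 ≤ K * JAPBdelay n K a := by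
  calc (n - (K + 1)) ^ 2 ≤ (n - K) * (n - (K + 1)) := by rw [sq]; gcongr; omega
    _ = ∑ i, (a i - 1) * (n - (K + 1)) := by
      rw [← sum_mul, sum_tsub_one ha, hsum, Fintype.card_fin]
    _ ≤ ∑ i : Fin K, (a i - 1) * (n - i - 2) :=
      sum_le_sum fun i _ => Nat.mul_le_mul_left _ (by omega)
    _ ≤ K * JAPBdelay n K a := by
      simpa [JAPBdelay] using sum_le_card_nsmul univ _ _ fun i _ => le_sup (f := fun i : Fin K =>
        (a i - 1) * (n - (i : ℕ) - 2)) (mem_univ i)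

lemma Tnk_le_JAPBdelay {n K : ℕ} {a : Fin K → ℕ} (ha : ∀ i, 1 ≤ a i) (hsum : ∑ i, a i = n) :
    Tnk n K ≤ JAPBdelay n K a := by
  unfold Tnk
  exact Nat.sInf_le ⟨a, ha, hsum, rfl⟩

lemma exists_Tnk_eq_JAPBdelay {n K : ℕ} {a : Fin K → ℕ} (ha : ∀ i, 1 ≤ a i)
    (hsum : ∑ i, a i = n) :
    ∃ b : Fin K → ℕ, (∀ i, 1 ≤ b i) ∧ ∑ i, b i = n ∧ Tnk n K = JAPBdelay n K b := by
  have hne : {t | ∃ b : Fin K → ℕ, (∀ i, 1 ≤ b i) ∧ ∑ i, b i = n ∧ t = JAPBdelay n K b}.Nonempty :=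
    ⟨_, a, ha, hsum, rfl⟩
  exact Nat.sInf_mem hne

/-- The composition of `n` into `K` parts whose excesses over `1` differ by at most one. -/
def balancedComposition (n K : ℕ) (i : Fin K) : ℕ :=
  (n - K) / K + (if (i : ℕ) < (n - K) % K then 1 else 0) + 1

lemma one_le_balancedComposition (n K : ℕ) (i : Fin K) : 1 ≤ balancedComposition n K i :=
  Nat.le_add_left 1 _

lemma sum_balancedComposition {n K : ℕ} (hK : 0 < K) (hn : K ≤ n) :
    ∑ i, balancedComposition n K i = n := by
  have hrem : ∑ i : Fin K, (if (i : ℕ) < (n - K) % K then 1 else 0) = (n - K) % K := by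
    rw [sum_boole, Fin.card_filter_val_lt, Nat.cast_id, min_eq_right (Nat.mod_lt _ hK).le]
  simp only [balancedComposition, sum_add_distrib, hrem, sum_const, card_univ, Fintype.card_fin,
    smul_eq_mul, mul_one]
  have := Nat.div_add_mod (n - K) K
  omega

lemma mul_JAPBdelay_balancedComposition_le {n K : ℕ} (hn : K ≤ n) :
    K * JAPBdelay n K (balancedComposition n K) ≤ n ^ 2 := by
  have hexcess : ∀ i, balancedComposition n K i - 1 ≤ (n - K) / K + 1 := fun i => by
    simp only [balancedComposition, Nat.add_sub_cancel]; split_ifs <;> simp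
  have hdelay : JAPBdelay n K (balancedComposition n K) ≤ ((n - K) / K + 1) * n :=
    Finset.sup_le fun i _ => Nat.mul_le_mul (hexcess i) (by omega)
  calc K * JAPBdelay n K (balancedComposition n K) ≤ (K * ((n - K) / K) + K) * n := by
        rw [← mul_add_one, mul_assoc]; gcongr
    _ ≤ n ^ 2 := by rw [sq]; gcongr; have := Nat.mul_div_le (n - K) K; omega

lemma mul_Tnk_le {n K : ℕ} (hK : 0 < K) (hn : K ≤ n) : K * Tnk n K ≤ n ^ 2 :=
  (Nat.mul_le_mul_left K (Tnk_le_JAPBdelay (one_le_balancedComposition n K)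
    (sum_balancedComposition hK hn))).trans (mul_JAPBdelay_balancedComposition_le hn)

lemma sq_le_mul_Tnk {n K : ℕ} (hK : 0 < K) (hn : K ≤ n) : (n - (K + 1)) ^ 2 ≤ K * Tnk n K := by
  obtain ⟨a, ha, hsum, hT⟩ := exists_Tnk_eq_JAPBdelay (one_le_balancedComposition n K)
    (sum_balancedComposition hK hn)
  rw [hT]
  exact sq_le_mul_JAPBdelay ha hsum

lemma tendsto_div_sq_of_sq_le_mul {f : ℕ → ℝ} {K c : ℝ} (hK : 0 < K)
    (hlow : ∀ᶠ n : ℕ in atTop, ((n : ℝ) - c) ^ 2 ≤ K * f n)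
    (hup : ∀ᶠ n : ℕ in atTop, K * f n ≤ (n : ℝ) ^ 2) :
    Tendsto (fun n : ℕ => f n / (n : ℝ) ^ 2) atTop (nhds (1 / K)) := by
  have hg : Tendsto (fun n : ℕ => (1 - c / n) ^ 2 / K) atTop (nhds (1 / K)) := by
    simpa using ((tendsto_const_nhds (x := (1 : ℝ)).sub
      (tendsto_const_div_atTop_nhds_zero_nat c)).pow 2).div_const K
  refine tendsto_of_tendsto_of_tendsto_of_le_of_le' hg tendsto_const_nhds ?_ ?_
  · filter_upwards [hlow, eventually_gt_atTop 0] with n hn hpos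
    have hpos : (0 : ℝ) < n := Nat.cast_pos.2 hpos
    rw [div_le_div_iff₀ hK (by positivity)]
    calc (1 - c / n) ^ 2 * (n : ℝ) ^ 2 = (n - c) ^ 2 := by field_simp
      _ ≤ K * f n := hn
      _ = f n * K := mul_comm _ _
  · filter_upwards [hup, eventually_gt_atTop 0] with n hn hpos
    have hpos : (0 : ℝ) < n := Nat.cast_pos.2 hpos
    rw [div_le_div_iff₀ (by positivity) hK, one_mul, mul_comm]
    exact hn

/-- Regime I asymptotics for parent JAP-B schemes: for fixed `α ∈ (0,1/2]` and
`K = ⌊1/α⌋ - 1`, we have `T(n,K)/n² → 1/(⌊1/α⌋ - 1)` as `n → ∞`. -/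
theorem stmt_12 (α : ℝ) (h1 : 0 < α) (h2 : α ≤ 1 / 2)
    (K : ℕ) (hK : K = ⌊1 / α⌋₊ - 1) :
    Tendsto (fun n : ℕ => (Tnk n K : ℝ) / (n : ℝ)^2) atTop
      (nhds (1 / ((⌊1 / α⌋₊ : ℝ) - 1))) := by
  have hfloor : 2 ≤ ⌊1 / α⌋₊ := Nat.le_floor (by rw [Nat.cast_ofNat, le_div_iff₀ h1]; linarith)
  have hK0 : 0 < K := by omega
  have hlimit : (⌊1 / α⌋₊ : ℝ) - 1 = K := by rw [hK, Nat.cast_sub (by omega)]; norm_num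
  rw [hlimit]
  refine tendsto_div_sq_of_sq_le_mul (c := K + 1) (Nat.cast_pos.2 hK0) ?_ ?_
  · filter_upwards [eventually_ge_atTop (K + 1)] with n hn
    have hsq : (((n - (K + 1)) ^ 2 : ℕ) : ℝ) ≤ (K * Tnk n K : ℕ) :=
      Nat.cast_le.2 (sq_le_mul_Tnk hK0 (by omega))
    push_cast [Nat.cast_sub hn] at hsq
    exact hsq
  · filter_upwards [eventually_ge_atTop K] with n hn
    exact_mod_cast mul_Tnk_le hK0 hn
end
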